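/- arXiv:1801.05633 — 3 statements merged into one kernel-verified Lean document; each statement's English description precedes it below -/
import Mathlib

section
/- Suppose X is a crowded Hausdorff space and U_1, U_2 are nonempty, closed, disjoint subsets of X. Then the Vietoris-basic open set ⟨int(U_1), int(U_2)⟩ ∩ S_c(X) is meager (of first category) in the space S_c(X). -/
open Set Filter Topology

/-- `S` is a nontrivial convergent sequence in a topological space. -/
def IsNTCS {X : Type*} [TopologicalSpace X] (S : Set X) : Prop :=
  ∃ (x : ℕ → X) (L : X), Function.Injective x ∧
    Tendsto x atTop (𝓝 L) ∧ L ∉ Set.range x ∧ S = Set.range x ∪ {L}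

/-- The family of nontrivial convergent sequences in `X`. -/
def Sc (X : Type*) [TopologicalSpace X] : Set (Set X) := {S | IsNTCS S}

/-- The Vietoris topology on subsets of `X`, generated by the standard subbasis. -/
instance vietoris (X : Type*) [TopologicalSpace X] : TopologicalSpace (Set X) :=
  TopologicalSpace.generateFrom
    {s | (∃ U : Set X, IsOpen U ∧ s = {K : Set X | K ⊆ U}) ∨
         (∃ U : Set X, IsOpen U ∧ s = {K : Set X | (K ∩ U).Nonempty})}

/-!
Let `S ∈ S_c(X)` converge to `L`. Since `U₁` and `U₂` are closed and disjoint, `L` misses one of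
them, say `U₂`, and then `S` meets `U₂` in only finitely many points. Hence `⟨int U₁, int U₂⟩`
is covered by the countably many families `hitsAtMost (int Uᵢ) n` of sequences meeting `int Uᵢ`
in at least one and at most `n` points. Each of them is nowhere dense: near a sequence `S` meeting
an open set `W`, any Vietoris neighbourhood of `S` contains `S ∪ t` for a set `t` of `n + 1`
fresh points of `W` (a crowded Hausdorff space has infinitely many such points near any point of
`S ∩ W`), and sequences hitting `n + 1` pairwise disjoint neighbourhoods of the points of `t`
form an open set missing `hitsAtMost W n`.
-/

theorem isNowhereDense_of_subset_closure_interior_compl {Y : Type*} [TopologicalSpace Y]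
    {s : Set Y} (h : s ⊆ closure (interior sᶜ)) : IsNowhereDense s := by
  rw [IsNowhereDense, eq_empty_iff_forall_notMem]
  intro x hx
  obtain ⟨y, hyG, hys⟩ := mem_closure_iff.1 (interior_subset hx) _ isOpen_interior hx
  obtain ⟨z, hzG, hz⟩ := mem_closure_iff.1 (h hys) _ isOpen_interior hyG
  rw [interior_compl] at hz
  exact hz (interior_subset hzG)

theorem Set.encard_le_encard_inter_of_pairwiseDisjoint {ι α : Type*} {t : Set ι}
    {N : ι → Set α} {K W : Set α} (hN : t.PairwiseDisjoint N) (hNW : ∀ i ∈ t, N i ⊆ W)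
    (hK : ∀ i ∈ t, (K ∩ N i).Nonempty) : t.encard ≤ (K ∩ W).encard := by
  obtain rfl | ⟨i₀, hi₀⟩ := t.eq_empty_or_nonempty
  · simp
  have : Nonempty α := ⟨(hK i₀ hi₀).some⟩
  choose! g hg using hK
  exact encard_le_encard_of_injOn (fun i hi => ⟨(hg i hi).1, hNW i hi (hg i hi).2⟩)
    fun i hi j hj hij => hN.elim_set hi hj _ (hg i hi).2 (hij ▸ (hg j hj).2)

section NontrivialConvergentSequence

variable {X : Type*} [TopologicalSpace X]

theorem isNTCS_iff {S : Set X} :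
    IsNTCS S ↔ S.Countable ∧ S.Infinite ∧ ∃ L ∈ S, ∀ N ∈ 𝓝 L, (S \ N).Finite := by
  constructor
  · rintro ⟨x, L, hinj, hx, -, rfl⟩
    refine ⟨(countable_range x).union (countable_singleton L),
      (infinite_range_of_injective hinj).mono subset_union_left, L, Or.inr rfl, fun N hN => ?_⟩
    rw [← Nat.cofinite_eq_atTop] at hx
    refine ((hx hN).image x).subset ?_
    rintro y ⟨⟨k, rfl⟩ | rfl, hy⟩
    · exact ⟨k, hy, rfl⟩
    · exact absurd (mem_of_mem_nhds hN) hy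
  · rintro ⟨hc, hinf, L, hL, hfin⟩
    have : Countable ↥(S \ {L}) := (hc.mono sdiff_subset).to_subtype
    have : Infinite ↥(S \ {L}) := (hinf.sdiff (finite_singleton L)).to_subtype
    obtain ⟨_⟩ := nonempty_denumerable ↥(S \ {L})
    let e := (Denumerable.eqv ↥(S \ {L})).symm
    have he : Function.Injective fun k => (e k : X) := Subtype.val_injective.comp e.injective
    refine ⟨fun k => e k, L, he, ?_, fun ⟨k, hk⟩ => (e k).2.2 hk, ?_⟩
    · rw [← Nat.cofinite_eq_atTop]
      intro N hN
      exact ((hfin N hN).preimage he.injOn).subset fun k hk => ⟨(e k).2.1, hk⟩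
    · rw [show (fun k => (e k : X)) = Subtype.val ∘ e from rfl, e.surjective.range_comp,
        Subtype.range_coe, sdiff_union_self,
        union_eq_self_of_subset_right (singleton_subset_iff.2 hL)]

theorem IsNTCS.union_finite {S t : Set X} (hS : IsNTCS S) (ht : t.Finite) : IsNTCS (S ∪ t) := by
  obtain ⟨hc, hinf, L, hL, hfin⟩ := isNTCS_iff.1 hS
  refine isNTCS_iff.2 ⟨hc.union ht.countable, hinf.mono subset_union_left, L, Or.inl hL,
    fun N hN => ((hfin N hN).union ht).subset ?_⟩
  rw [union_sdiff_distrib]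
  exact union_subset_union_right _ sdiff_subset

theorem IsNTCS.finite_inter_or_finite_inter {S U₁ U₂ : Set X} (hS : IsNTCS S)
    (h₁ : IsClosed U₁) (h₂ : IsClosed U₂) (hd : Disjoint U₁ U₂) :
    (S ∩ U₁).Finite ∨ (S ∩ U₂).Finite := by
  obtain ⟨-, -, L, -, hfin⟩ := isNTCS_iff.1 hS
  have key : ∀ C, IsClosed C → L ∉ C → (S ∩ C).Finite := fun C hC hLC => by
    simpa only [sdiff_compl] using hfin _ (hC.isOpen_compl.mem_nhds hLC)
  by_cases hL : L ∈ U₁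
  · exact Or.inr (key U₂ h₂ (disjoint_left.1 hd hL))
  · exact Or.inl (key U₁ h₁ hL)

theorem IsNTCS.infinite_sdiff [T2Space X] [∀ x : X, NeBot (𝓝[≠] x)] {S O : Set X}
    (hS : IsNTCS S) (hO : IsOpen O) (hne : O.Nonempty) : (O \ S).Infinite := by
  obtain ⟨-, -, L, -, hfin⟩ := isNTCS_iff.1 hS
  obtain ⟨p, hp⟩ := hne
  obtain ⟨q, hqO, hqL⟩ : (O \ {L}).Nonempty :=
    ((infinite_of_mem_nhds p (hO.mem_nhds hp)).sdiff (finite_singleton L)).nonempty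
  obtain ⟨Q, N, hQ, hN, hqQ, hLN, hQN⟩ := t2_separation hqL
  have hinf : ((O ∩ Q) \ (S \ N)).Infinite :=
    (infinite_of_mem_nhds q ((hO.inter hQ).mem_nhds ⟨hqO, hqQ⟩)).sdiff (hfin N (hN.mem_nhds hLN))
  refine hinf.mono ?_
  rintro y ⟨⟨hyO, hyQ⟩, hy⟩
  exact ⟨hyO, fun hyS => hy ⟨hyS, disjoint_left.1 hQN hyQ⟩⟩

end NontrivialConvergentSequence

section Vietoris

variable {X : Type*} [TopologicalSpace X]

theorem isOpen_setOf_inter_nonempty {U : Set X} (hU : IsOpen U) :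
    IsOpen {K : Set X | (K ∩ U).Nonempty} :=
  TopologicalSpace.GenerateOpen.basic _ (Or.inr ⟨U, hU, rfl⟩)

theorem IsOpen.exists_isOpen_forall_superset_mem {𝒢 : Set (Set X)} (h𝒢 : IsOpen 𝒢)
    {K : Set X} (hK : K ∈ 𝒢) :
    ∃ O, IsOpen O ∧ K ⊆ O ∧ ∀ K', K ⊆ K' → K' ⊆ O → K' ∈ 𝒢 := by
  induction h𝒢 generalizing K with
  | basic s hs =>
    rcases hs with ⟨U, hU, rfl⟩ | ⟨U, hU, rfl⟩
    · exact ⟨U, hU, hK, fun _ _ h => h⟩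
    · exact ⟨univ, isOpen_univ, subset_univ K, fun _ h _ => hK.mono (inter_subset_inter_left U h)⟩
  | univ => exact ⟨univ, isOpen_univ, subset_univ K, fun _ _ _ => trivial⟩
  | inter s t _ _ ihs iht =>
    obtain ⟨O, hO, hKO, hOs⟩ := ihs hK.1
    obtain ⟨O', hO', hKO', hO't⟩ := iht hK.2
    exact ⟨O ∩ O', hO.inter hO', subset_inter hKO hKO', fun K' h h' =>
      ⟨hOs K' h (h'.trans inter_subset_left), hO't K' h (h'.trans inter_subset_right)⟩⟩
  | sUnion 𝒮 _ ih =>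
    obtain ⟨s, hs, hKs⟩ := hK
    obtain ⟨O, hO, hKO, hOs⟩ := ih s hs hKs
    exact ⟨O, hO, hKO, fun K' h h' => ⟨s, hs, hOs K' h h'⟩⟩

end Vietoris

namespace Sc

variable {X : Type*} [TopologicalSpace X]

def hitsAtMost (W : Set X) (n : ℕ) : Set (Sc X) :=
  {S | ((S : Set X) ∩ W).Nonempty ∧ ((S : Set X) ∩ W).encard ≤ n}

theorem mem_iUnion_hitsAtMost {S : Sc X} {W C : Set X} (hWC : W ⊆ C)
    (hC : ((S : Set X) ∩ C).Finite) (hW : ((S : Set X) ∩ W).Nonempty) :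
    S ∈ ⋃ n : ℕ, hitsAtMost W n :=
  mem_iUnion.2 ⟨_, hW, (hC.subset (inter_subset_inter_right _ hWC)).cast_ncard_eq.ge⟩

theorem hitsAtMost_subset_closure_interior_compl [T2Space X] [∀ x : X, NeBot (𝓝[≠] x)]
    {W : Set X} (hW : IsOpen W) (n : ℕ) :
    hitsAtMost W n ⊆ closure (interior (hitsAtMost W n)ᶜ) := by
  rintro S₀ ⟨⟨p, hpS, hpW⟩, -⟩
  rw [mem_closure_iff_nhds]
  intro 𝒩 h𝒩
  obtain ⟨𝒰, h𝒰, h𝒰𝒩⟩ := (mem_nhds_subtype _ _ _).1 h𝒩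
  obtain ⟨𝒢, h𝒢𝒰, h𝒢, hS₀⟩ := mem_nhds_iff.1 h𝒰
  obtain ⟨O, hO, hS₀O, hO𝒢⟩ := h𝒢.exists_isOpen_forall_superset_mem hS₀
  have hfresh := S₀.2.infinite_sdiff (hO.inter hW) ⟨p, hS₀O hpS, hpW⟩
  obtain ⟨t, ht, htcard⟩ :=
    exists_subset_encard_eq (k := (n + 1 : ℕ)) (hfresh.encard_eq ▸ le_top)
  have htfin : t.Finite := finite_of_encard_eq_coe htcard
  obtain ⟨N, hN, hNdisj⟩ := htfin.t2_separation
  let T : Sc X := ⟨S₀ ∪ t, S₀.2.union_finite htfin⟩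
  have hT𝒩 : T ∈ 𝒩 :=
    h𝒰𝒩 (h𝒢𝒰 (hO𝒢 _ subset_union_left (union_subset hS₀O fun a ha => (ht ha).1.1)))
  refine ⟨T, hT𝒩, mem_interior.2
    ⟨Subtype.val ⁻¹' ⋂ a ∈ t, {K : Set X | (K ∩ (N a ∩ (O ∩ W))).Nonempty}, ?_, ?_, ?_⟩⟩
  · rintro K hK ⟨-, hKn⟩
    have hle := encard_le_encard_inter_of_pairwiseDisjoint (hNdisj.mono fun a => inter_subset_left)
      (fun a _ => inter_subset_right.trans inter_subset_right) (mem_iInter₂.1 hK)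
    rw [htcard] at hle
    exact absurd (hle.trans hKn) (by norm_cast; omega)
  · exact (htfin.isOpen_biInter fun a _ =>
      isOpen_setOf_inter_nonempty ((hN a).2.inter (hO.inter hW))).preimage continuous_subtype_val
  · exact mem_iInter₂.2 fun a ha => ⟨a, Or.inr ha, (hN a).1, (ht ha).1⟩

end Sc

theorem stmt_7_general {X : Type*} [TopologicalSpace X] [T2Space X]
    (hcrowded : ∀ x : X, ¬ IsOpen ({x} : Set X))
    (U₁ U₂ : Set X)
    (hcl₁ : IsClosed U₁) (hcl₂ : IsClosed U₂) (hdisj : Disjoint U₁ U₂) :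
    IsMeagre {S : (Sc X) | (S : Set X) ⊆ interior U₁ ∪ interior U₂ ∧
      ((S : Set X) ∩ interior U₁).Nonempty ∧
      ((S : Set X) ∩ interior U₂).Nonempty} := by
  have : ∀ x : X, NeBot (𝓝[≠] x) := fun x =>
    ⟨fun h => hcrowded x ((isOpen_singleton_iff_punctured_nhds x).2 h)⟩
  have hmeagre : ∀ V : Set X, IsOpen V → IsMeagre (⋃ n, Sc.hitsAtMost V n) := fun V hV =>
    isMeagre_iUnion fun n => (isNowhereDense_of_subset_closure_interior_compl
      (Sc.hitsAtMost_subset_closure_interior_compl hV n)).isMeagre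
  refine ((hmeagre (interior U₁) isOpen_interior).union
    (hmeagre (interior U₂) isOpen_interior)).mono ?_
  rintro S ⟨-, h₁, h₂⟩
  rcases S.2.finite_inter_or_finite_inter hcl₁ hcl₂ hdisj with hfin | hfin
  exacts [Or.inl (Sc.mem_iUnion_hitsAtMost interior_subset hfin h₁),
    Or.inr (Sc.mem_iUnion_hitsAtMost interior_subset hfin h₂)]

theorem stmt_7 {X : Type*} [TopologicalSpace X] [T2Space X]
    (hcrowded : ∀ x : X, ¬ IsOpen ({x} : Set X))
    (U₁ U₂ : Set X) (hne₁ : U₁.Nonempty) (hne₂ : U₂.Nonempty)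
    (hcl₁ : IsClosed U₁) (hcl₂ : IsClosed U₂) (hdisj : Disjoint U₁ U₂) :
    IsMeagre {S : (Sc X) | (S : Set X) ⊆ interior U₁ ∪ interior U₂ ∧
      ((S : Set X) ∩ interior U₁).Nonempty ∧
      ((S : Set X) ∩ interior U₂).Nonempty} :=
  stmt_7_general hcrowded U₁ U₂ hcl₁ hcl₂ hdisj
end

section
/- If X is a regular Hausdorff crowded space with S_c(X) nonempty, then S_c(X) with the Vietoris topology is not a Baire space. -/
/-!
Pick two terms of a nontrivial convergent sequence and open neighbourhoods `P₀`, `P₁` of them with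
disjoint closures. For each `n`, the sequences having at least `n` points in `Pᵢ` form an open set
of `S_c(X)`, dense in the open set of sequences meeting both `P₀` and `P₁`: in a crowded space
any open set contains infinitely many points off a given convergent sequence, and adding finitely
many of them keeps it a convergent sequence inside a given Vietoris neighbourhood. If `S_c(X)`
were Baire, some sequence would have infinitely many points in both `P₀` and `P₁`, so its limit
would lie in both closures.
-/

open Set Filter Topology

theorem IsOpen.inter_iInter_nonempty_of_subset_closure {Y ι : Type*} [TopologicalSpace Y]
    [BaireSpace Y] [Countable ι] {O : Set Y} {f : ι → Set Y} (hO : IsOpen O) (hne : O.Nonempty)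
    (hfo : ∀ i, IsOpen (f i)) (hfd : ∀ i, O ⊆ closure (f i)) : (O ∩ ⋂ i, f i).Nonempty := by
  have hdense : ∀ i, Dense (f i ∪ (closure O)ᶜ) := fun i => by
    rw [dense_iff_closure_eq, closure_union, eq_univ_iff_forall]
    intro y
    by_cases hy : y ∈ closure O
    · exact Or.inl (closure_minimal (hfd i) isClosed_closure hy)
    · exact Or.inr (subset_closure hy)
  obtain ⟨y, hyO, hy⟩ := (dense_iInter_of_isOpen
    (fun i => (hfo i).union isClosed_closure.isOpen_compl) hdense).inter_open_nonempty O hO hne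
  exact ⟨y, hyO, mem_iInter.2 fun i => (mem_iInter.1 hy i).resolve_right
    (not_not.2 (subset_closure hyO))⟩

section

variable {X : Type*} [TopologicalSpace X]

namespace Vietoris

theorem isOpen_setOf_inter_nonempty {U : Set X} (hU : IsOpen U) :
    IsOpen {K : Set X | (K ∩ U).Nonempty} :=
  .basic _ (Or.inr ⟨U, hU, rfl⟩)

theorem exists_isOpen_Icc_subset {𝒱 : Set (Set X)} (h𝒱 : IsOpen 𝒱) {K : Set X} (hK : K ∈ 𝒱) :
    ∃ U, IsOpen U ∧ K ⊆ U ∧ Icc K U ⊆ 𝒱 := by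
  induction h𝒱 generalizing K with
  | basic s hs =>
    -- hit-sets are upward closed, so only the `⊆ U` constraints matter
    rcases hs with ⟨U, hU, rfl⟩ | ⟨U, hU, rfl⟩
    · exact ⟨U, hU, hK, fun _ h => h.2⟩
    · exact ⟨univ, isOpen_univ, subset_univ K,
        fun K' h => hK.mono (inter_subset_inter_left U h.1)⟩
  | univ => exact ⟨univ, isOpen_univ, subset_univ K, subset_univ _⟩
  | inter s t _ _ ihs iht =>
    obtain ⟨U, hU, hKU, hsU⟩ := ihs hK.1
    obtain ⟨V, hV, hKV, htV⟩ := iht hK.2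
    exact ⟨U ∩ V, hU.inter hV, subset_inter hKU hKV, fun K' h =>
      ⟨hsU ⟨h.1, h.2.trans inter_subset_left⟩, htV ⟨h.1, h.2.trans inter_subset_right⟩⟩⟩
  | sUnion S _ ih =>
    obtain ⟨s, hs, hKs⟩ := hK
    obtain ⟨U, hU, hKU, hsU⟩ := ih s hs hKs
    exact ⟨U, hU, hKU, fun K' h => ⟨s, hs, hsU h⟩⟩

theorem isOpen_setOf_le_encard_inter [T2Space X] {P : Set X} (hP : IsOpen P) (n : ℕ) :
    IsOpen {K : Set X | n ≤ (K ∩ P).encard} := by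
  rw [isOpen_iff_forall_mem_open]
  intro K hK
  obtain ⟨F, hFKP, hFn⟩ := exists_subset_encard_eq hK
  obtain ⟨W, hW, hWd⟩ := (finite_of_encard_eq_coe hFn).t2_separation
  refine ⟨⋂ x ∈ F, {K' | (K' ∩ (W x ∩ P)).Nonempty}, ?_,
    (finite_of_encard_eq_coe hFn).isOpen_biInter
      fun x _ => isOpen_setOf_inter_nonempty ((hW x).2.inter hP),
    mem_iInter₂.2 fun x hx => ⟨x, (hFKP hx).1, (hW x).1, (hFKP hx).2⟩⟩
  intro K' hK'
  choose! p hp using fun x hx => mem_iInter₂.1 hK' x hx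
  have hinj : InjOn p F := fun x hx y hy hxy =>
    hWd.elim hx hy (Set.not_disjoint_iff.2 ⟨p x, (hp x hx).2.1, hxy ▸ (hp y hy).2.1⟩)
  calc (n : ℕ∞) = (p '' F).encard := by rw [hinj.encard_image, hFn]
    _ ≤ (K' ∩ P).encard :=
      encard_le_encard (image_subset_iff.2 fun x hx => ⟨(hp x hx).1, (hp x hx).2.2⟩)

end Vietoris

namespace IsNTCS

theorem insert {S : Set X} (hS : IsNTCS S) {y : X} (hy : y ∉ S) : IsNTCS (insert y S) := by
  obtain ⟨x, L, hinj, hx, hL, rfl⟩ := hS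
  simp only [mem_union, mem_singleton_iff, not_or] at hy
  refine ⟨fun n => Nat.casesOn n y x, L, ?_, (tendsto_add_atTop_iff_nat 1).1 hx, ?_, ?_⟩
  · rintro (_ | a) (_ | b) hab
    · rfl
    · exact absurd ⟨b, hab.symm⟩ hy.1
    · exact absurd ⟨a, hab⟩ hy.1
    · exact congrArg _ (hinj hab)
  · rw [Nat.range_casesOn]
    rintro (h | h)
    exacts [hy.2 (eq_of_mem_singleton h).symm, hL h]
  · rw [Nat.range_casesOn, singleton_union, insert_union]

theorem union_of_finite {S F : Set X} (hS : IsNTCS S) (hF : F.Finite) : IsNTCS (S ∪ F) := by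
  induction F, hF using Set.Finite.induction_on with
  | empty => simpa
  | @insert a s _ _ ih =>
    rw [union_insert]
    by_cases h : a ∈ S ∪ s
    · rwa [insert_eq_of_mem h]
    · exact ih.insert h

theorem infinite_diff [T2Space X] (hcr : ∀ x : X, ¬ IsOpen ({x} : Set X)) {S V : Set X}
    (hS : IsNTCS S) (hV : IsOpen V) (hne : V.Nonempty) : (V \ S).Infinite := by
  obtain ⟨x, L, -, hx, -, rfl⟩ := hS
  obtain ⟨v, hvV, hvL⟩ : ∃ v ∈ V, v ≠ L := by
    by_contra! h
    exact hcr L (eq_singleton_iff_nonempty_unique_mem.2 ⟨hne, h⟩ ▸ hV)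
  -- `v` has a neighbourhood meeting `S` in finitely many points, and all its neighbourhoods are
  -- infinite
  obtain ⟨W, Q, hW, hQ, hvW, hLQ, hWQ⟩ := t2_separation hvL
  have hfin : (W ∩ (range x ∪ {L})).Finite := by
    have hout : {k | x k ∉ Q}.Finite :=
      eventually_cofinite.1 (Nat.cofinite_eq_atTop ▸ hx.eventually (hQ.mem_nhds hLQ))
    refine (hout.image x).subset ?_
    rintro _ ⟨hw, ⟨k, rfl⟩ | rfl⟩
    · exact ⟨k, hWQ.notMem_of_mem_left hw, rfl⟩
    · exact absurd hLQ (hWQ.notMem_of_mem_left hw)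
  have : NeBot (𝓝[≠] v) := by
    rw [neBot_iff, Ne, ← isOpen_singleton_iff_punctured_nhds]
    exact hcr v
  refine ((infinite_of_mem_nhds v (inter_mem (hV.mem_nhds hvV) (hW.mem_nhds hvW))).sdiff
    hfin).mono ?_
  rintro z ⟨⟨hzV, hzW⟩, h⟩
  exact ⟨hzV, fun hzS => h ⟨hzW, hzS⟩⟩

theorem exists_mem_closure_of_infinite_inter {S : Set X} (hS : IsNTCS S) :
    ∃ L, ∀ P, (S ∩ P).Infinite → L ∈ closure P := by
  obtain ⟨x, L, -, hx, -, rfl⟩ := hS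
  refine ⟨L, fun P hP => mem_closure_of_frequently_of_tendsto ?_ hx⟩
  rw [Nat.frequently_atTop_iff_infinite]
  refine fun hfin => hP (((hfin.image x).union (finite_singleton L)).subset ?_)
  rintro _ ⟨⟨k, rfl⟩ | rfl, hP⟩
  · exact Or.inl ⟨k, hP, rfl⟩
  · exact Or.inr rfl

end IsNTCS

theorem mem_closure_setOf_le_encard_inter [T2Space X] (hcr : ∀ x : X, ¬ IsOpen ({x} : Set X))
    {P : Set X} (hP : IsOpen P) {K : Sc X} (hK : (K.1 ∩ P).Nonempty) (n : ℕ) :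
    K ∈ closure {K : Sc X | n ≤ (K.1 ∩ P).encard} := by
  rw [mem_closure_iff]
  rintro _ ⟨𝒱, h𝒱, rfl⟩ hK𝒱
  obtain ⟨U, hU, hKU, hU𝒱⟩ := Vietoris.exists_isOpen_Icc_subset h𝒱 hK𝒱
  obtain ⟨z, hzK, hzP⟩ := hK
  obtain ⟨F, hF, rfl⟩ :=
    (IsNTCS.infinite_diff hcr K.2 (hU.inter hP) ⟨z, hKU hzK, hzP⟩).exists_subset_card_eq n
  refine ⟨⟨K.1 ∪ F, IsNTCS.union_of_finite K.2 F.finite_toSet⟩,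
    hU𝒱 ⟨subset_union_left, union_subset hKU fun y hy => (hF hy).1.1⟩, ?_⟩
  calc ((F.card : ℕ) : ℕ∞) = (F : Set X).encard := (encard_coe_eq_coe_finsetCard F).symm
    _ ≤ ((K.1 ∪ F) ∩ P).encard := encard_le_encard fun y hy => ⟨Or.inr hy, (hF hy).1.2⟩

end

theorem stmt_9 {X : Type*} [TopologicalSpace X] [T2Space X] [RegularSpace X]
    (hcrowded : ∀ x : X, ¬ IsOpen ({x} : Set X))
    (hne : (Sc X).Nonempty) :
    ¬ BaireSpace (Sc X) := by
  intro hBaire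
  obtain ⟨S₀, hS₀⟩ := hne
  obtain ⟨x, _, hinj, -, -, hS₀x⟩ := id hS₀
  obtain ⟨P₀, hxP₀, hP₀, P₁, hxP₁, hP₁, hdisj⟩ :=
    exists_open_nhds_disjoint_closure (hinj.ne zero_ne_one)
  let P : Fin 2 → Set X := ![P₀, P₁]
  have hP : ∀ i, IsOpen (P i) := Fin.forall_fin_two.2 ⟨hP₀, hP₁⟩
  let O : Set (Sc X) := ⋂ i, Subtype.val ⁻¹' {K | (K ∩ P i).Nonempty}
  have hO : IsOpen O := isOpen_iInter_of_finite fun i =>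
    (Vietoris.isOpen_setOf_inter_nonempty (hP i)).preimage continuous_subtype_val
  have hS₀O : ⟨S₀, hS₀⟩ ∈ O := mem_iInter.2 <| Fin.forall_fin_two.2
    ⟨⟨x 0, hS₀x ▸ Or.inl ⟨0, rfl⟩, hxP₀⟩, ⟨x 1, hS₀x ▸ Or.inl ⟨1, rfl⟩, hxP₁⟩⟩
  obtain ⟨K, -, hK⟩ := hO.inter_iInter_nonempty_of_subset_closure (f := fun j : Fin 2 × ℕ =>
      {K : Sc X | j.2 ≤ (K.1 ∩ P j.1).encard}) ⟨_, hS₀O⟩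
    (fun ⟨i, n⟩ => (Vietoris.isOpen_setOf_le_encard_inter (hP i) n).preimage
      continuous_subtype_val)
    (fun ⟨i, n⟩ K hK => mem_closure_setOf_le_encard_inter hcrowded (hP i) (mem_iInter.1 hK i) n)
  have hinf : ∀ i, (K.1 ∩ P i).Infinite := fun i => encard_eq_top_iff.1 <| top_le_iff.1 <|
    ENat.forall_natCast_le_iff_le.1 fun n _ => mem_iInter.1 hK (i, n)
  obtain ⟨L, hL⟩ := IsNTCS.exists_mem_closure_of_infinite_inter K.2
  exact hdisj.ne_of_mem (hL _ (hinf 0)) (hL _ (hinf 1)) rfl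
end

section
/- In any topological space Y, the union of an arbitrary family of open subsets each of which is meager in Y is itself meager in Y (Banach Category Theorem). -/
/-!
Choose by Zorn's lemma a maximal pairwise disjoint family `M` of open sets, each contained in
some `s i`. By maximality `⋃ i, s i ⊆ closure (⋃₀ M)`, and the frontier of the open set `⋃₀ M`
is nowhere dense. Each `V ∈ M` is meagre, say `V ⊆ ⋃ n, t n V` with `t n V` nowhere dense; as
the members of `M` are open and disjoint, each `⋃ V ∈ M, V ∩ t n V` is again nowhere dense, and
these countably many sets cover `⋃₀ M`.
-/

open Set

section

variable {Y : Type*} [TopologicalSpace Y]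

theorem IsOpen.isNowhereDense_frontier {W : Set Y} (hW : IsOpen W) :
    IsNowhereDense (frontier W) := by
  rw [isClosed_frontier.isNowhereDense_iff, ← frontier_compl]
  exact interior_frontier hW.isClosed_compl

theorem IsMeagre.exists_isNowhereDense_seq {s : Set Y} (hs : IsMeagre s) :
    ∃ f : ℕ → Set Y, (∀ n, IsNowhereDense (f n)) ∧ s ⊆ ⋃ n, f n := by
  obtain ⟨S, hSnd, hScount, hsS⟩ := isMeagre_iff_countable_union_isNowhereDense.mp hs
  obtain rfl | hSne := S.eq_empty_or_nonempty
  · exact ⟨fun _ ↦ ∅, fun _ ↦ isNowhereDense_empty, by simpa using hsS⟩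
  obtain ⟨f, rfl⟩ := hScount.exists_eq_range hSne
  exact ⟨f, fun n ↦ hSnd _ (mem_range_self n), by rwa [sUnion_range] at hsS⟩

/-- An open set inside `closure (⋃ V ∈ M, V ∩ t V)` meets each `V ∈ M` only inside
`closure (t V)`, so it misses `⋃₀ M` and hence the closure of the union. -/
theorem Set.PairwiseDisjoint.isNowhereDense_biUnion_inter {M : Set (Set Y)}
    (hdisj : M.PairwiseDisjoint id) (hopen : ∀ V ∈ M, IsOpen V) {t : Set Y → Set Y}
    (ht : ∀ V ∈ M, IsNowhereDense (t V)) : IsNowhereDense (⋃ V ∈ M, V ∩ t V) := by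
  set A := ⋃ V ∈ M, V ∩ t V
  set U := interior (closure A)
  have hA_inter : ∀ V ∈ M, V ∩ A ⊆ t V := by
    rintro V hV x ⟨hxV, hxA⟩
    obtain ⟨V', hV', hxV', hxt⟩ := mem_iUnion₂.mp hxA
    obtain rfl : V = V' := hdisj.elim_set hV hV' x hxV hxV'
    exact hxt
  have hU_disj : ∀ V ∈ M, Disjoint U V := by
    intro V hV
    have hUV : U ∩ V ⊆ interior (closure (t V)) := by
      refine (isOpen_interior.inter (hopen V hV)).subset_interior_iff.mpr ?_
      calc U ∩ V ⊆ closure A ∩ V := inter_subset_inter_left _ interior_subset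
        _ ⊆ closure (A ∩ V) := (hopen V hV).closure_inter
        _ ⊆ closure (t V) := closure_mono (inter_comm A V ▸ hA_inter V hV)
    rw [disjoint_iff_inter_eq_empty]
    exact subset_eq_empty hUV (ht V hV)
  have hA_sub : A ⊆ ⋃₀ M :=
    iUnion₂_subset fun V hV ↦ inter_subset_left.trans (subset_sUnion_of_mem hV)
  have hU_closure : Disjoint U (closure (⋃₀ M)) :=
    (disjoint_sUnion_right.mpr hU_disj).closure_right isOpen_interior
  exact (hU_closure.mono_right (closure_mono hA_sub)).eq_bot_of_le interior_subset

theorem Set.PairwiseDisjoint.isMeagre_sUnion {M : Set (Set Y)} (hdisj : M.PairwiseDisjoint id)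
    (hopen : ∀ V ∈ M, IsOpen V) (hmeagre : ∀ V ∈ M, IsMeagre V) : IsMeagre (⋃₀ M) := by
  have hseq : ∀ V, ∃ f : ℕ → Set Y, (∀ n, IsNowhereDense (f n)) ∧ (V ∈ M → V ⊆ ⋃ n, f n) := by
    intro V
    by_cases hV : V ∈ M
    · obtain ⟨f, hf, hVf⟩ := (hmeagre V hV).exists_isNowhereDense_seq
      exact ⟨f, hf, fun _ ↦ hVf⟩
    · exact ⟨fun _ ↦ ∅, fun _ ↦ isNowhereDense_empty, fun h ↦ absurd h hV⟩
  choose f hf hVf using hseq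
  have hsub : ⋃₀ M ⊆ ⋃ n, ⋃ V ∈ M, V ∩ f V n := by
    rintro x ⟨V, hV, hxV⟩
    obtain ⟨n, hxn⟩ := mem_iUnion.mp (hVf V hV hxV)
    exact mem_iUnion.mpr ⟨n, mem_biUnion hV ⟨hxV, hxn⟩⟩
  exact (isMeagre_iUnion fun n ↦
    (hdisj.isNowhereDense_biUnion_inter hopen fun V _ ↦ hf V n).isMeagre).mono hsub

theorem exists_pairwiseDisjoint_isOpen_subset_closure_sUnion {ι : Sort*} {s : ι → Set Y}
    (hs : ∀ i, IsOpen (s i)) : ∃ M : Set (Set Y), M.PairwiseDisjoint id ∧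
      (∀ V ∈ M, IsOpen V ∧ ∃ i, V ⊆ s i) ∧ ⋃ i, s i ⊆ closure (⋃₀ M) := by
  obtain ⟨M, ⟨hMsub, hdisj⟩, hmax⟩ := zorn_subset
    {M : Set (Set Y) | (∀ V ∈ M, IsOpen V ∧ ∃ i, V ⊆ s i) ∧ M.PairwiseDisjoint id}
    fun c hc hchain ↦ ⟨⋃₀ c,
      ⟨fun V ⟨_, hF, hV⟩ ↦ (hc hF).1 V hV, hchain.pairwiseDisjoint_sUnion id |>.mpr
        fun _ hF ↦ (hc hF).2⟩,
      fun _ ↦ subset_sUnion_of_mem⟩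
  refine ⟨M, hdisj, hMsub, iUnion_subset fun i x hx ↦ by_contra fun hxW ↦ ?_⟩
  -- Otherwise the part of `s i` outside `closure (⋃₀ M)` could be added to `M`.
  set V := s i ∩ (closure (⋃₀ M))ᶜ
  have hV_disj : ∀ V' ∈ M, V ≠ V' → Disjoint V V' := fun V' hV' _ ↦
    disjoint_left.mpr fun y hyV hyV' ↦ hyV.2 (subset_closure ⟨V', hV', hyV'⟩)
  have hV_mem : V ∈ M := hmax
    ⟨forall_mem_insert.mpr ⟨⟨(hs i).inter isClosed_closure.isOpen_compl, i, inter_subset_left⟩,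
      hMsub⟩, hdisj.insert hV_disj⟩ (subset_insert V M) (mem_insert V M)
  exact hxW (subset_closure ⟨V, hV_mem, hx, hxW⟩)

end

theorem stmt_10 {Y : Type*} [TopologicalSpace Y] {ι : Sort*} (s : ι → Set Y)
    (hopen : ∀ i, IsOpen (s i)) (hmeagre : ∀ i, IsMeagre (s i)) :
    IsMeagre (⋃ i, s i) := by
  obtain ⟨M, hdisj, hM, hcover⟩ := exists_pairwiseDisjoint_isOpen_subset_closure_sUnion hopen
  have hM_meagre : IsMeagre (⋃₀ M) := hdisj.isMeagre_sUnion (fun V hV ↦ (hM V hV).1)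
    fun V hV ↦ let ⟨i, hVi⟩ := (hM V hV).2; (hmeagre i).mono hVi
  have hfrontier : IsMeagre (frontier (⋃₀ M)) :=
    (isOpen_sUnion fun V hV ↦ (hM V hV).1).isNowhereDense_frontier.isMeagre
  rw [closure_eq_self_union_frontier] at hcover
  exact (hM_meagre.union hfrontier).mono hcover
end
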